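/- arXiv:2103.16333 — 2 statements merged into one kernel-verified Lean document; each statement's English description precedes it below -/
import Mathlib

section
/- Let b ∈ W^{1,1}(0,T), g ∈ C(ℝ) with g(ξ) → -∞ as ξ → ∞, and let y ∈ W^{1,1}(0,T) solve y'(t) = g(y(t)) + b'(t) on [0,T] with y(0) = y₀. Suppose there exist constants N₀ ≥ 0 and N₁ ≥ 0 such that b(t₂) - b(t₁) ≤ N₀ + N₁(t₂ - t₁) for all 0 ≤ t₁ < t₂ ≤ T, and let ξ* be such that g(ξ) ≤ -N₁ for all ξ ≥ ξ*. Then y(t) ≤ max{y₀, ξ*} + N₀ for all t ∈ [0,T]. -/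
/-!
Suppose `y` exceeds `M + N₀` at some time `t`, where `M = max y₀ ξ₀`, and let `t₁ < t` be the last
time before `t` at which `y ≤ M`. On `(t₁, t]` the solution stays above `ξ₀`, so `g(y) ≤ -N₁` there
and `y' ≤ b' - N₁`. Comparing derivatives on `[t₁, t]` bounds the increase of `y` by
`b t - b t₁ - N₁ (t - t₁) ≤ N₀`, a contradiction.
-/

open Set

theorem exists_le_forall_Ioc_lt_of_continuousOn {f : ℝ → ℝ} {a c M : ℝ} (hac : a ≤ c)
    (hf : ContinuousOn f (Icc a c)) (ha : f a ≤ M) (hc : M < f c) :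
    ∃ t₁ ∈ Ico a c, f t₁ ≤ M ∧ ∀ t ∈ Ioc t₁ c, M < f t := by
  set S := Icc a c ∩ f ⁻¹' Iic M
  have haS : a ∈ S := ⟨left_mem_Icc.2 hac, ha⟩
  have hSbdd : BddAbove S := ⟨c, fun _ hx => hx.1.2⟩
  obtain ⟨⟨ha₁, hc₁⟩, hle⟩ : sSup S ∈ S :=
    (hf.preimage_isClosed_of_isClosed isClosed_Icc isClosed_Iic).csSup_mem ⟨a, haS⟩ hSbdd
  refine ⟨sSup S, ⟨ha₁, hc₁.lt_of_ne ?_⟩, hle, fun t ht => ?_⟩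
  · intro heq
    exact (hle.trans_lt (heq ▸ hc)).false
  · by_contra! hft
    exact (le_csSup hSbdd ⟨⟨ha₁.trans ht.1.le, ht.2⟩, hft⟩).not_gt ht.1

theorem sub_le_sub_of_hasDerivAt_le {f g f' g' : ℝ → ℝ} {a c : ℝ} (hac : a ≤ c)
    (hf : ∀ t ∈ Icc a c, HasDerivAt f (f' t) t) (hg : ∀ t ∈ Icc a c, HasDerivAt g (g' t) t)
    (hle : ∀ t ∈ Ioo a c, f' t ≤ g' t) : f c - f a ≤ g c - g a := by
  have hderiv : ∀ t ∈ Icc a c, HasDerivAt (g - f) (g' t - f' t) t :=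
    fun t ht => (hg t ht).sub (hf t ht)
  have hmono : MonotoneOn (g - f) (Icc a c) := by
    refine monotoneOn_of_hasDerivWithinAt_nonneg (convex_Icc a c)
      (fun t ht => (hderiv t ht).continuousAt.continuousWithinAt)
      (fun t ht => (hderiv t (interior_subset ht)).hasDerivWithinAt) fun t ht => ?_
    rw [interior_Icc] at ht
    exact sub_nonneg.2 (hle t ht)
  have := hmono (left_mem_Icc.2 hac) (right_mem_Icc.2 hac) hac
  simp only [Pi.sub_apply] at this
  linarith

theorem zlotnik_inequality_general
    (T y₀ N₀ N₁ ξ₀ : ℝ)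
    (g : ℝ → ℝ)
    (b y b' : ℝ → ℝ)
    (hb : ∀ t ∈ Set.Icc (0:ℝ) T, HasDerivAt b (b' t) t)
    (hy : ∀ t ∈ Set.Icc (0:ℝ) T, HasDerivAt y (g (y t) + b' t) t)
    (hy0 : y 0 = y₀)
    (hN₀ : 0 ≤ N₀)
    (hbgrowth : ∀ t₁ t₂ : ℝ, 0 ≤ t₁ → t₁ < t₂ → t₂ ≤ T →
      b t₂ - b t₁ ≤ N₀ + N₁ * (t₂ - t₁))
    (hξ : ∀ ξ : ℝ, ξ₀ ≤ ξ → g ξ ≤ -N₁) :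
    ∀ t ∈ Set.Icc (0:ℝ) T, y t ≤ max y₀ ξ₀ + N₀ := by
  intro t ht
  by_contra! hyt
  obtain ⟨t₁, ⟨ht₁0, ht₁t⟩, hyt₁, habove⟩ :=
    exists_le_forall_Ioc_lt_of_continuousOn (M := max y₀ ξ₀) ht.1
      (fun s hs => (hy s ⟨hs.1, hs.2.trans ht.2⟩).continuousAt.continuousWithinAt)
      (hy0.trans_le (le_max_left _ _)) (by linarith)
  have hsub : Icc t₁ t ⊆ Icc 0 T := Icc_subset_Icc ht₁0 ht.2
  have hcompare : y t - y t₁ ≤ (b t - N₁ * t) - (b t₁ - N₁ * t₁) :=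
    sub_le_sub_of_hasDerivAt_le ht₁t.le (fun s hs => hy s (hsub hs))
      (fun s hs => (hb s (hsub hs)).sub (hasDerivAt_const_mul N₁))
      fun s hs => by
        have := hξ (y s) ((le_max_right _ _).trans (habove s ⟨hs.1, hs.2.le⟩).le)
        linarith
  have := hbgrowth t₁ t ht₁0 ht₁t ht.2
  linarith

/-- Zlotnik's inequality: a comparison lemma for ODEs `y' = g(y) + b'`
with linearly bounded forcing `b`. -/
theorem zlotnik_inequality
    (T y₀ N₀ N₁ ξ₀ : ℝ) (hT : 0 < T)
    (g : ℝ → ℝ) (hg : Continuous g)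
    (hgtop : Filter.Tendsto g Filter.atTop Filter.atBot)
    (b y b' : ℝ → ℝ)
    (hb : ∀ t ∈ Set.Icc (0:ℝ) T, HasDerivAt b (b' t) t)
    (hy : ∀ t ∈ Set.Icc (0:ℝ) T, HasDerivAt y (g (y t) + b' t) t)
    (hy0 : y 0 = y₀)
    (hN₀ : 0 ≤ N₀) (hN₁ : 0 ≤ N₁)
    (hbgrowth : ∀ t₁ t₂ : ℝ, 0 ≤ t₁ → t₁ < t₂ → t₂ ≤ T →
      b t₂ - b t₁ ≤ N₀ + N₁ * (t₂ - t₁))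
    (hξ : ∀ ξ : ℝ, ξ₀ ≤ ξ → g ξ ≤ -N₁) :
    ∀ t ∈ Set.Icc (0:ℝ) T, y t ≤ max y₀ ξ₀ + N₀ :=
  zlotnik_inequality_general T y₀ N₀ N₁ ξ₀ g b y b' hb hy hy0 hN₀ hbgrowth hξ
end

section
/- Let ρ : [0,1] → [0, ρ₊] be measurable, μ(s) = 1 + s^β with β ≥ 0, and define θ(ρ) = ∫₁^ρ μ(s)/s ds. Let u ∈ H¹(0,1). Then |∫₀¹ μ(ρ(y)) u'(y) dy| ≤ 1 + ∫₀¹ μ(ρ(y)) |u'(y)|² dy + (β/4) [sup_{y : ρ(y) ≥ 1} θ(ρ(y))] · ∫₀¹ μ(ρ(y)) |u'(y)|² dy. -/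
open MeasureTheory intervalIntegral Set

/-! On `{ρ ≤ 1}` the viscosity `μ(ρ) = 1 + ρ^β` is at most `2`; on `{ρ ≥ 1}` the bound
`ρ^β - 1 = ∫₁^ρ β s^(β-1) ds ≤ β θ(ρ)` gives `μ(ρ) ≤ 2 + β θ(ρ)`. Hence `μ(ρ) ≤ c := 2 + β sup θ`
everywhere, and the pointwise AM-GM inequality `μ|u'| ≤ 1 + μ²|u'|²/4 ≤ 1 + (c/4) μ|u'|²`
integrates to the claim. -/

lemma abs_mul_le_one_add_mul_sq {m c : ℝ} (a : ℝ) (hm : 0 ≤ m) (hmc : m ≤ c) :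
    |m * a| ≤ 1 + c / 4 * (m * a ^ 2) := by
  have amgm : |m * a| ≤ 1 + (m * a) ^ 2 / 4 := by
    nlinarith [sq_nonneg (|m * a| - 2), sq_abs (m * a)]
  have : (m * a) ^ 2 ≤ c * (m * a ^ 2) := by
    rw [mul_pow, sq m, mul_assoc]
    exact mul_le_mul_of_nonneg_right hmc (by positivity)
  linarith

theorem abs_integral_mul_le {m v : ℝ → ℝ} {a b c : ℝ} (hab : a ≤ b)
    (hm : ∀ y ∈ Icc a b, 0 ≤ m y ∧ m y ≤ c)
    (hmv : IntervalIntegrable (fun y => m y * v y) volume a b)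
    (hmv2 : IntervalIntegrable (fun y => m y * v y ^ 2) volume a b) :
    |∫ y in a..b, m y * v y| ≤ (b - a) + c / 4 * ∫ y in a..b, m y * v y ^ 2 :=
  calc |∫ y in a..b, m y * v y| ≤ ∫ y in a..b, |m y * v y| := abs_integral_le_integral_abs hab
    _ ≤ ∫ y in a..b, (1 + c / 4 * (m y * v y ^ 2)) :=
        integral_mono_on hab hmv.abs (intervalIntegrable_const.add (hmv2.const_mul _))
          fun y hy => abs_mul_le_one_add_mul_sq _ (hm y hy).1 (hm y hy).2
    _ = (b - a) + c / 4 * ∫ y in a..b, m y * v y ^ 2 := by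
        rw [integral_add intervalIntegrable_const (hmv2.const_mul _),
          intervalIntegral.integral_const_mul, intervalIntegral.integral_const, smul_eq_mul,
          mul_one]

theorem IntervalIntegrable.of_sq {v : ℝ → ℝ} {a b : ℝ} (hv : AEStronglyMeasurable v)
    (hv2 : IntervalIntegrable (fun y => v y ^ 2) volume a b) :
    IntervalIntegrable v volume a b :=
  ⟨((memLp_two_iff_integrable_sq hv.restrict).2 hv2.1).integrable one_le_two,
    ((memLp_two_iff_integrable_sq hv.restrict).2 hv2.2).integrable one_le_two⟩

theorem IntervalIntegrable.bdd_mul {m v : ℝ → ℝ} {a b C : ℝ}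
    (hv : IntervalIntegrable v volume a b) (hm : AEStronglyMeasurable m) (hmC : ∀ y, ‖m y‖ ≤ C) :
    IntervalIntegrable (fun y => m y * v y) volume a b :=
  ⟨hv.1.bdd_mul hm.restrict (.of_forall hmC), hv.2.bdd_mul hm.restrict (.of_forall hmC)⟩

lemma intervalIntegrable_one_add_rpow_div {β x y : ℝ} (hx : 0 < x) (hy : 0 < y) :
    IntervalIntegrable (fun s => (1 + s ^ β) / s) volume x y := by
  refine ContinuousOn.intervalIntegrable fun s hs => ?_
  have hs0 : s ≠ 0 := ((lt_min hx hy).trans_le hs.1).ne'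
  exact ((continuousAt_const.add (Real.continuousAt_rpow_const s β (.inl hs0))).div
    continuousAt_id hs0).continuousWithinAt

lemma integral_one_add_rpow_div_nonneg (β : ℝ) {a b : ℝ} (ha : 0 < a) (hab : a ≤ b) :
    0 ≤ ∫ s in a..b, (1 + s ^ β) / s :=
  integral_nonneg hab fun s hs =>
    have hs0 : 0 < s := ha.trans_le hs.1
    div_nonneg (by positivity) hs0.le

lemma monotoneOn_integral_one_add_rpow_div (β : ℝ) {a : ℝ} (ha : 0 < a) :
    MonotoneOn (fun x => ∫ s in a..x, (1 + s ^ β) / s) (Ioi 0) := by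
  intro x hx y hy hxy
  have hsplit := integral_interval_sub_left (intervalIntegrable_one_add_rpow_div (β := β) ha hy)
    (intervalIntegrable_one_add_rpow_div ha hx)
  have := integral_one_add_rpow_div_nonneg β hx hxy
  dsimp only
  linarith

lemma rpow_sub_one_le_mul_integral {β x : ℝ} (hβ : 0 ≤ β) (hx : 1 ≤ x) :
    x ^ β - 1 ≤ β * ∫ s in (1:ℝ)..x, (1 + s ^ β) / s := by
  have hpos : ∀ s ∈ uIcc 1 x, 0 < s := by
    rw [uIcc_of_le hx]
    exact fun s hs => one_pos.trans_le hs.1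
  have hint : IntervalIntegrable (fun s => β * s ^ (β - 1)) volume 1 x :=
    (continuousOn_const.mul
      (continuousOn_id.rpow_const fun s hs => .inl (hpos s hs).ne')).intervalIntegrable
  have hftc : ∫ s in (1:ℝ)..x, β * s ^ (β - 1) = x ^ β - 1 := by
    rw [integral_eq_sub_of_hasDerivAt
      (fun s hs => Real.hasDerivAt_rpow_const (.inl (hpos s hs).ne')) hint, Real.one_rpow]
  rw [← hftc, ← intervalIntegral.integral_const_mul]
  refine integral_mono_on hx hint ((intervalIntegrable_one_add_rpow_div one_pos
    (one_pos.trans_le hx)).const_mul β) fun s hs => mul_le_mul_of_nonneg_left ?_ hβ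
  have hs0 : 0 < s := one_pos.trans_le hs.1
  rw [Real.rpow_sub_one hs0.ne']
  exact div_le_div_of_nonneg_right (by linarith) hs0.le

lemma one_add_rpow_le_two_add_mul {β x S : ℝ} (hβ : 0 ≤ β) (hx : 0 ≤ x) (hS : 0 ≤ S)
    (hθ : 1 ≤ x → ∫ s in (1:ℝ)..x, (1 + s ^ β) / s ≤ S) :
    1 + x ^ β ≤ 2 + β * S := by
  rcases le_total x 1 with hx1 | hx1
  · nlinarith [Real.rpow_le_one hx hx1 hβ, mul_nonneg hβ hS]
  · nlinarith [rpow_sub_one_le_mul_integral hβ hx1, mul_le_mul_of_nonneg_left (hθ hx1) hβ]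

theorem viscous_flux_interpolation_general
    (β ρmax : ℝ) (hβ : 0 ≤ β)
    (ρ u : ℝ → ℝ) (hρmeas : Measurable ρ)
    (hρrange : ∀ y, 0 ≤ ρ y ∧ ρ y ≤ ρmax)
    (hux : IntervalIntegrable (fun y => (deriv u y) ^ 2) volume 0 1) :
    |∫ y in (0:ℝ)..1, (1 + ρ y ^ β) * deriv u y| ≤
      1 + (∫ y in (0:ℝ)..1, (1 + ρ y ^ β) * (deriv u y) ^ 2) +
        β / 4 *
          sSup ((fun y => ∫ s in (1:ℝ)..(ρ y), (1 + s ^ β) / s) ''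
            {y ∈ Set.Icc (0:ℝ) 1 | 1 ≤ ρ y}) *
          ∫ y in (0:ℝ)..1, (1 + ρ y ^ β) * (deriv u y) ^ 2 := by
  set θ := fun x => ∫ s in (1:ℝ)..x, (1 + s ^ β) / s
  set S := sSup ((fun y => θ (ρ y)) '' {y ∈ Icc (0:ℝ) 1 | 1 ≤ ρ y})
  have hθS : ∀ y ∈ Icc (0:ℝ) 1, 1 ≤ ρ y → θ (ρ y) ≤ S := fun y hy hy1 => by
    refine le_csSup ?_ ⟨y, ⟨hy, hy1⟩, rfl⟩
    rw [← image_image]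
    exact (monotoneOn_integral_one_add_rpow_div β one_pos).map_bddAbove
      (image_subset_iff.2 fun y hy => one_pos.trans_le hy.2)
      ⟨ρmax, forall_mem_image.2 fun y _ => (hρrange y).2,
        one_pos.trans_le (hy1.trans (hρrange y).2)⟩
  have hμ0 : ∀ y, 0 ≤ 1 + ρ y ^ β := fun y =>
    add_nonneg zero_le_one (Real.rpow_nonneg (hρrange y).1 β)
  have hS : 0 ≤ S := Real.sSup_nonneg <|
    forall_mem_image.2 fun y hy => integral_one_add_rpow_div_nonneg β one_pos hy.2
  have hμ : ∀ y ∈ Icc (0:ℝ) 1, 0 ≤ 1 + ρ y ^ β ∧ 1 + ρ y ^ β ≤ 2 + β * S := fun y hy =>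
    ⟨hμ0 y, one_add_rpow_le_two_add_mul hβ (hρrange y).1 hS (hθS y hy)⟩
  have hμmeas : AEStronglyMeasurable fun y => 1 + ρ y ^ β :=
    (measurable_const.add (hρmeas.pow_const β)).aestronglyMeasurable
  have hμbdd : ∀ y, ‖1 + ρ y ^ β‖ ≤ 1 + ρmax ^ β := fun y => by
    rw [Real.norm_of_nonneg (hμ0 y)]
    gcongr
    exacts [(hρrange y).1, (hρrange y).2]
  have hu' := IntervalIntegrable.of_sq (measurable_deriv u).aestronglyMeasurable hux
  set I := ∫ y in (0:ℝ)..1, (1 + ρ y ^ β) * (deriv u y) ^ 2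
  have hI : 0 ≤ I := integral_nonneg zero_le_one fun y hy => mul_nonneg (hμ y hy).1 (sq_nonneg _)
  calc _ ≤ (1 - 0) + (2 + β * S) / 4 * I :=
        abs_integral_mul_le zero_le_one hμ (hu'.bdd_mul hμmeas hμbdd) (hux.bdd_mul hμmeas hμbdd)
    _ ≤ 1 + I + β / 4 * S * I := by linarith

/-- Interpolation estimate for the viscous flux integral, with
`μ(s) = 1 + s^β` and `θ(ρ) = ∫₁^ρ μ(s)/s ds`:
`|∫₀¹ μ(ρ)u'| ≤ 1 + ∫₀¹ μ(ρ)|u'|² + (β/4)·sup_{ρ(y)≥1} θ(ρ(y)) · ∫₀¹ μ(ρ)|u'|²`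
(the sup over the empty set being `0`). -/
theorem viscous_flux_interpolation
    (β ρmax : ℝ) (hβ : 0 ≤ β) (hρmax : 0 < ρmax)
    (ρ u : ℝ → ℝ) (hρmeas : Measurable ρ)
    (hρrange : ∀ y, 0 ≤ ρ y ∧ ρ y ≤ ρmax)
    (hu : Differentiable ℝ u)
    (hux : IntervalIntegrable (fun y => (deriv u y) ^ 2) volume 0 1) :
    |∫ y in (0:ℝ)..1, (1 + ρ y ^ β) * deriv u y| ≤
      1 + (∫ y in (0:ℝ)..1, (1 + ρ y ^ β) * (deriv u y) ^ 2) +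
        β / 4 *
          sSup ((fun y => ∫ s in (1:ℝ)..(ρ y), (1 + s ^ β) / s) ''
            {y ∈ Set.Icc (0:ℝ) 1 | 1 ≤ ρ y}) *
          ∫ y in (0:ℝ)..1, (1 + ρ y ^ β) * (deriv u y) ^ 2 :=
  viscous_flux_interpolation_general β ρmax hβ ρ u hρmeas hρrange hux
end
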